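/- Performance difference lemma: for any two policies π and π̃ on a finite discounted MDP, J(π̃) = J(π) + (1/(1−γ)) Σ_s d_π̃(s) Σ_a π̃(a|s) A_π(s,a), where A_π(s,a) = Q_π(s,a) − V_π(s). -/

import Mathlib

open scoped BigOperators

/-- State transition matrix induced by policy `π`: `(Pmat P π) s s' = ∑ a, π s a * P s a s'`. -/
noncomputable def Pmat {S A : Type*} [Fintype A] (P : S → A → S → ℝ) (π : S → A → ℝ) :
    Matrix S S ℝ := fun s s' => ∑ a, π s a * P s a s'

/-- State distribution at time `t` when starting from `p0` and following `π`. -/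
noncomputable def stateDist {S A : Type*} [Fintype S] [DecidableEq S] [Fintype A]
    (P : S → A → S → ℝ) (π : S → A → ℝ) (p0 : S → ℝ) (t : ℕ) : S → ℝ :=
  (((Pmat P π).transpose) ^ t).mulVec p0

/-- Discounted state distribution `d_π(s) = (1-γ) ∑ γ^t Pr(s_t = s)`. -/
noncomputable def dDist {S A : Type*} [Fintype S] [DecidableEq S] [Fintype A]
    (P : S → A → S → ℝ) (π : S → A → ℝ) (p0 : S → ℝ) (γ : ℝ) (s : S) : ℝ :=
  (1 - γ) * ∑' t : ℕ, γ ^ t * stateDist P π p0 t s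

/-- Expected discounted return `J(π)` with initial distribution `p0`. -/
noncomputable def Jret {S A : Type*} [Fintype S] [DecidableEq S] [Fintype A]
    (P : S → A → S → ℝ) (π : S → A → ℝ) (r : S → A → ℝ) (p0 : S → ℝ) (γ : ℝ) : ℝ :=
  ∑' t : ℕ, γ ^ t * ∑ s, stateDist P π p0 t s * ∑ a, π s a * r s a

/-- Value function `V_π(s)`: return starting deterministically from `s`. -/
noncomputable def Vval {S A : Type*} [Fintype S] [Fintype A] [DecidableEq S]
    (P : S → A → S → ℝ) (π : S → A → ℝ) (r : S → A → ℝ) (γ : ℝ) (s : S) : ℝ :=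
  Jret P π r (fun s' => if s' = s then 1 else 0) γ

/-- Action-value function `Q_π(s,a)`. -/
noncomputable def Qval {S A : Type*} [Fintype S] [Fintype A] [DecidableEq S]
    (P : S → A → S → ℝ) (π : S → A → ℝ) (r : S → A → ℝ) (γ : ℝ) (s : S) (a : A) : ℝ :=
  r s a + γ * ∑ s', P s a s' * Vval P π r γ s'

/-- Advantage function `A_π(s,a) = Q_π(s,a) - V_π(s)`. -/
noncomputable def Adv {S A : Type*} [Fintype S] [Fintype A] [DecidableEq S]
    (P : S → A → S → ℝ) (π : S → A → ℝ) (r : S → A → ℝ) (γ : ℝ) (s : S) (a : A) : ℝ :=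
  Qval P π r γ s a - Vval P π r γ s

/-! The discounted occupancy `ρ(s) = ∑ₜ γᵗ Pr(sₜ = s)` of `πt` satisfies the flow equation
`ρ = p0 + γ ρ Pπt`. Paired with the Bellman residual `rπt + γ Pπt V - V` of an arbitrary `V`
it therefore telescopes to `J(πt) - ⟨p0, V⟩`. For `V = V_π` the residual is the `πt`-average of
`A_π`, and `⟨p0, V_π⟩ = J(π)` because the return is linear in the initial distribution. -/

open Finset Matrix

section
variable {S A : Type*} [Fintype S] [Fintype A] [DecidableEq S]

lemma Pmat_mem_rowStochastic {P : S → A → S → ℝ} {π : S → A → ℝ}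
    (hP0 : ∀ s a s', 0 ≤ P s a s') (hP1 : ∀ s a, ∑ s', P s a s' = 1)
    (hπ0 : ∀ s a, 0 ≤ π s a) (hπ1 : ∀ s, ∑ a, π s a = 1) :
    Pmat P π ∈ rowStochastic ℝ S := by
  refine mem_rowStochastic_iff_sum.2 ⟨fun s s' => ?_, fun s => ?_⟩
  · exact sum_nonneg fun a _ => mul_nonneg (hπ0 s a) (hP0 s a s')
  · simp only [Pmat]
    rw [sum_comm]
    simp [← mul_sum, hP1, hπ1]

lemma summable_geometric_mul_pow_apply {M : Matrix S S ℝ} (hM : M ∈ rowStochastic ℝ S)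
    {γ : ℝ} (hγ0 : 0 ≤ γ) (hγ1 : γ < 1) (i j : S) :
    Summable fun t : ℕ => γ ^ t * (M ^ t) i j := by
  refine (summable_geometric_of_lt_one hγ0 hγ1).of_nonneg_of_le
    (fun t => mul_nonneg (pow_nonneg hγ0 t) (nonneg_of_mem_rowStochastic (pow_mem hM t)))
    (fun t => mul_le_of_le_one_right (pow_nonneg hγ0 t)
      (le_one_of_mem_rowStochastic (pow_mem hM t)))

variable (P : S → A → S → ℝ) (π : S → A → ℝ)

lemma stateDist_apply (p0 : S → ℝ) (t : ℕ) (s : S) :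
    stateDist P π p0 t s = ∑ s0, p0 s0 * (Pmat P π ^ t) s0 s := by
  simp [stateDist, ← transpose_pow, mulVec, dotProduct, mul_comm]

lemma stateDist_zero (p0 : S → ℝ) : stateDist P π p0 0 = p0 := by
  simp [stateDist]

lemma stateDist_succ_apply (p0 : S → ℝ) (t : ℕ) (s' : S) :
    stateDist P π p0 (t + 1) s' = ∑ s, stateDist P π p0 t s * Pmat P π s s' := by
  simp only [stateDist_apply, pow_succ, mul_apply, mul_sum, sum_mul, mul_assoc]
  exact sum_comm

/-- `dDist` without its normalising factor `1 - γ`. -/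
noncomputable def occupancy (p0 : S → ℝ) (γ : ℝ) (s : S) : ℝ :=
  ∑' t : ℕ, γ ^ t * stateDist P π p0 t s

variable {P π} {γ : ℝ}

lemma summable_geometric_mul_stateDist (hM : Pmat P π ∈ rowStochastic ℝ S) (hγ0 : 0 ≤ γ)
    (hγ1 : γ < 1) (p0 : S → ℝ) (s : S) :
    Summable fun t : ℕ => γ ^ t * stateDist P π p0 t s := by
  simp_rw [stateDist_apply, mul_sum, mul_left_comm _ (p0 _)]
  exact summable_sum fun s0 _ => (summable_geometric_mul_pow_apply hM hγ0 hγ1 s0 s).mul_left _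

lemma occupancy_eq_sum (hM : Pmat P π ∈ rowStochastic ℝ S) (hγ0 : 0 ≤ γ) (hγ1 : γ < 1)
    (p0 : S → ℝ) (s : S) :
    occupancy P π p0 γ s =
      ∑ s0, p0 s0 * occupancy P π (fun s' => if s' = s0 then 1 else 0) γ s := by
  simp_rw [occupancy, stateDist_apply, ite_mul, one_mul, zero_mul, sum_ite_eq', mem_univ,
    if_true, ← tsum_mul_left, mul_sum, mul_left_comm _ (p0 _)]
  exact (Summable.tsum_finsetSum fun s0 _ =>
    (summable_geometric_mul_pow_apply hM hγ0 hγ1 s0 s).mul_left _)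

lemma occupancy_flow (hM : Pmat P π ∈ rowStochastic ℝ S) (hγ0 : 0 ≤ γ) (hγ1 : γ < 1)
    (p0 : S → ℝ) (s' : S) :
    occupancy P π p0 γ s' = p0 s' + γ * ∑ s, occupancy P π p0 γ s * Pmat P π s s' := by
  rw [occupancy, (summable_geometric_mul_stateDist hM hγ0 hγ1 p0 s').tsum_eq_zero_add]
  simp only [pow_zero, one_mul, stateDist_zero, stateDist_succ_apply, occupancy]
  simp_rw [← tsum_mul_right]
  rw [← Summable.tsum_finsetSum fun s _ =>
    (summable_geometric_mul_stateDist hM hγ0 hγ1 p0 s).mul_right _, ← tsum_mul_left]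
  refine congrArg _ (tsum_congr fun t => ?_)
  simp only [pow_succ, mul_sum]
  exact sum_congr rfl fun s _ => by ring

lemma Jret_eq_sum_occupancy (hM : Pmat P π ∈ rowStochastic ℝ S) (hγ0 : 0 ≤ γ) (hγ1 : γ < 1)
    (r : S → A → ℝ) (p0 : S → ℝ) :
    Jret P π r p0 γ = ∑ s, occupancy P π p0 γ s * ∑ a, π s a * r s a := by
  simp_rw [Jret, occupancy, ← tsum_mul_right]
  rw [← Summable.tsum_finsetSum fun s _ =>
    (summable_geometric_mul_stateDist hM hγ0 hγ1 p0 s).mul_right _]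
  simp_rw [mul_sum, mul_assoc]

lemma Jret_eq_sum_mul_Vval (hM : Pmat P π ∈ rowStochastic ℝ S) (hγ0 : 0 ≤ γ) (hγ1 : γ < 1)
    (r : S → A → ℝ) (p0 : S → ℝ) :
    Jret P π r p0 γ = ∑ s, p0 s * Vval P π r γ s := by
  simp_rw [Vval, Jret_eq_sum_occupancy hM hγ0 hγ1, occupancy_eq_sum hM hγ0 hγ1 p0, sum_mul,
    mul_sum, mul_assoc]
  exact sum_comm

lemma sum_occupancy_mul_bellman_residual (hM : Pmat P π ∈ rowStochastic ℝ S) (hγ0 : 0 ≤ γ)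
    (hγ1 : γ < 1) (r : S → A → ℝ) (p0 V : S → ℝ) :
    ∑ s, occupancy P π p0 γ s *
        (∑ a, π s a * r s a + γ * ∑ s', Pmat P π s s' * V s' - V s) =
      Jret P π r p0 γ - ∑ s, p0 s * V s := by
  have hflow : ∑ s, occupancy P π p0 γ s * (γ * ∑ s', Pmat P π s s' * V s') =
      ∑ s', (occupancy P π p0 γ s' - p0 s') * V s' := by
    have hstep : ∀ s', occupancy P π p0 γ s' - p0 s' =
        γ * ∑ s, occupancy P π p0 γ s * Pmat P π s s' := fun s' => by
      linarith [occupancy_flow hM hγ0 hγ1 p0 s']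
    simp_rw [hstep, mul_sum, sum_mul]
    rw [sum_comm]
    exact sum_congr rfl fun _ _ => sum_congr rfl fun _ _ => by ring
  rw [Jret_eq_sum_occupancy hM hγ0 hγ1]
  simp only [mul_sub, mul_add, sum_sub_distrib, sum_add_distrib, sub_mul] at hflow ⊢
  linarith

lemma sum_mul_Adv_eq {πt : S → A → ℝ} (r : S → A → ℝ) {s : S} (hπt1 : ∑ a, πt s a = 1) :
    ∑ a, πt s a * Adv P π r γ s a =
      ∑ a, πt s a * r s a + γ * ∑ s', Pmat P πt s s' * Vval P π r γ s' - Vval P π r γ s := by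
  simp only [Adv, Qval, mul_sub, mul_add, sum_sub_distrib, sum_add_distrib, ← sum_mul, hπt1,
    one_mul, Pmat, mul_sum]
  congr 2
  rw [sum_comm]
  refine sum_congr rfl fun _ _ => ?_
  rw [sum_mul, mul_sum]
  exact sum_congr rfl fun _ _ => by ring

end

theorem performance_difference_lemma_general {S A : Type*}
    [Fintype S] [Fintype A] [DecidableEq S]
    (P : S → A → S → ℝ) (π πt : S → A → ℝ) (r : S → A → ℝ) (p0 : S → ℝ) (γ : ℝ)
    (hγ0 : 0 ≤ γ) (hγ1 : γ < 1)
    (hP0 : ∀ s a s', 0 ≤ P s a s') (hP1 : ∀ s a, ∑ s', P s a s' = 1)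
    (hπ0 : ∀ s a, 0 ≤ π s a) (hπ1 : ∀ s, ∑ a, π s a = 1)
    (hπt0 : ∀ s a, 0 ≤ πt s a) (hπt1 : ∀ s, ∑ a, πt s a = 1) :
    Jret P πt r p0 γ = Jret P π r p0 γ +
      (1 / (1 - γ)) * ∑ s, dDist P πt p0 γ s * ∑ a, πt s a * Adv P π r γ s a := by
  have hres := sum_occupancy_mul_bellman_residual (Pmat_mem_rowStochastic hP0 hP1 hπt0 hπt1)
    hγ0 hγ1 r p0 (Vval P π r γ)
  rw [Jret_eq_sum_mul_Vval (Pmat_mem_rowStochastic hP0 hP1 hπ0 hπ1) hγ0 hγ1]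
  simp only [occupancy] at hres
  simp only [dDist, sum_mul_Adv_eq r (hπt1 _), mul_assoc, ← mul_sum, hres]
  field_simp [show 1 - γ ≠ 0 by linarith]
  ring

theorem performance_difference_lemma {S A : Type*}
    [Fintype S] [Fintype A] [DecidableEq S]
    (P : S → A → S → ℝ) (π πt : S → A → ℝ) (r : S → A → ℝ) (p0 : S → ℝ) (γ : ℝ)
    (hγ0 : 0 ≤ γ) (hγ1 : γ < 1)
    (hP0 : ∀ s a s', 0 ≤ P s a s') (hP1 : ∀ s a, ∑ s', P s a s' = 1)
    (hπ0 : ∀ s a, 0 ≤ π s a) (hπ1 : ∀ s, ∑ a, π s a = 1)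
    (hπt0 : ∀ s a, 0 ≤ πt s a) (hπt1 : ∀ s, ∑ a, πt s a = 1)
    (hp00 : ∀ s, 0 ≤ p0 s) (hp01 : ∑ s, p0 s = 1) :
    Jret P πt r p0 γ = Jret P π r p0 γ +
      (1 / (1 - γ)) * ∑ s, dDist P πt p0 γ s * ∑ a, πt s a * Adv P π r γ s a :=
  performance_difference_lemma_general P π πt r p0 γ hγ0 hγ1 hP0 hP1 hπ0 hπ1 hπt0 hπt1
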